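/- arXiv:2103.01402 — 3 statements merged into one kernel-verified Lean document; each statement's English description precedes it below -/
import Mathlib

section
/- Let G be a finite simple graph and v a vertex of G. Then φ(G) ≤ φ(G − v) + φ(G − N[v]) + Σ_{u ∈ N(v)} φ(G − (N[v] ∪ N[u])), where the sum is over all neighbors u of v. -/
open SimpleGraph Finset

/-- `F` is a dissociation set of `G`: the induced subgraph `G[F]` has maximum degree at most 1,
i.e. every vertex of `F` has at most one neighbor inside `F`. -/
def IsDissocSet {V : Type*} (G : SimpleGraph V) (F : Set V) : Prop :=
  ∀ v ∈ F, ({u ∈ F | G.Adj v u} : Set V).ncard ≤ 1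

/-- A maximal dissociation set: a dissociation set not properly contained in any other
dissociation set. -/
def IsMaximalDissocSet {V : Type*} (G : SimpleGraph V) (F : Set V) : Prop :=
  IsDissocSet G F ∧ ∀ F' : Set V, IsDissocSet G F' → F ⊆ F' → F = F'

/-- `φ(G)`: the number of maximal dissociation sets of `G`. -/
noncomputable def numMaximalDissoc {V : Type*} (G : SimpleGraph V) : ℕ :=
  Set.ncard {F : Set V | IsMaximalDissocSet G F}

/-- `φ(G − S)`: the number of maximal dissociation sets of the subgraph of `G`
induced on the complement of `S`. -/
noncomputable def phiDel {V : Type*} (G : SimpleGraph V) (S : Set V) : ℕ :=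
  numMaximalDissoc (G.induce Sᶜ)

/-! Sort the maximal dissociation sets `F` of `G` by their trace on the closed neighbourhood of
`v`: either `v ∉ F`, or `v` is isolated in `G[F]`, or `v` is matched in `G[F]` to a neighbour `u`.
In each case the trace `T = F ∩ S` on the deleted set `S` (`{v}`, `N[v]`, `N[v] ∪ N[u]`) is a
dissociation set with no edge to `V ∖ S`, so by maximality `F` is determined by `F ∖ S`, which
is a maximal dissociation set of `G − S`. -/

section

variable {V : Type*} {G : SimpleGraph V}

theorem IsDissocSet.mono [Finite V] {F F' : Set V} (hF : IsDissocSet G F) (h : F' ⊆ F) :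
    IsDissocSet G F' := by
  intro w hw
  refine (Set.ncard_le_ncard ?_).trans (hF w (h hw))
  exact fun _ hx => ⟨h hx.1, hx.2⟩

theorem IsDissocSet.eq_of_adj_of_adj [Finite V] {F : Set V} (hF : IsDissocSet G F) {v x y : V}
    (hv : v ∈ F) (hx : x ∈ F) (hy : y ∈ F) (hvx : G.Adj v x) (hvy : G.Adj v y) : x = y :=
  (Set.ncard_le_one_iff).mp (hF v hv) ⟨hx, hvx⟩ ⟨hy, hvy⟩

theorem isDissocSet_of_ncard_le_two [Finite V] {T : Set V} (hT : T.ncard ≤ 2) :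
    IsDissocSet G T := by
  intro w hw
  calc ({u ∈ T | G.Adj w u} : Set V).ncard ≤ (T \ {w}).ncard :=
        Set.ncard_le_ncard fun _ hu => ⟨hu.1, (G.ne_of_adj hu.2).symm⟩
    _ = T.ncard - 1 := Set.ncard_sdiff_singleton_of_mem hw
    _ ≤ 1 := by omega

theorem IsDissocSet.union [Finite V] {T D : Set V} (hT : IsDissocSet G T) (hD : IsDissocSet G D)
    (hTD : ∀ t ∈ T, ∀ d ∈ D, ¬G.Adj t d) : IsDissocSet G (T ∪ D) := by
  rintro w (hw | hw)
  · refine (Set.ncard_le_ncard ?_).trans (hT w hw)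
    rintro u ⟨hu | hu, hwu⟩
    exacts [⟨hu, hwu⟩, absurd hwu (hTD w hw u hu)]
  · refine (Set.ncard_le_ncard ?_).trans (hD w hw)
    rintro u ⟨hu | hu, hwu⟩
    exacts [absurd hwu.symm (hTD u hu w hw), ⟨hu, hwu⟩]

theorem isDissocSet_induce_iff {s : Set V} {D : Set s} :
    IsDissocSet (G.induce s) D ↔ IsDissocSet G (Subtype.val '' D) := by
  have hsep : ∀ w : s, ({u ∈ Subtype.val '' D | G.Adj w u} : Set V)
      = Subtype.val '' {u ∈ D | (G.induce s).Adj w u} := by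
    intro w
    ext x
    constructor
    · rintro ⟨⟨y, hy, rfl⟩, hadj⟩
      exact ⟨y, ⟨hy, hadj⟩, rfl⟩
    · rintro ⟨y, ⟨hy, hadj⟩, rfl⟩
      exact ⟨⟨y, hy, rfl⟩, hadj⟩
  simp only [IsDissocSet, Set.forall_mem_image, hsep,
    Set.ncard_image_of_injective _ Subtype.val_injective]

def maxDissocWithTrace (G : SimpleGraph V) (S T : Set V) : Set (Set V) :=
  {F | IsMaximalDissocSet G F ∧ F ∩ S = T}

theorem ncard_maxDissocWithTrace_le_phiDel [Finite V] {S T : Set V} (hT : IsDissocSet G T)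
    (hTS : ∀ t ∈ T, G.neighborSet t ⊆ S) :
    (maxDissocWithTrace G S T).ncard ≤ phiDel G S := by
  have hval : ∀ F : Set V, Subtype.val '' (Subtype.val ⁻¹' F : Set ↥Sᶜ) = F ∩ Sᶜ := fun F => by
    rw [Set.image_preimage_eq_inter_range, Subtype.range_val]
  have hdecomp : ∀ F ∈ maxDissocWithTrace G S T, F = T ∪ F ∩ Sᶜ := fun F hF => by
    rw [← hF.2, Set.inter_union_compl]
  refine Set.ncard_le_ncard_of_injOn (fun F => (Subtype.val ⁻¹' F : Set ↥Sᶜ)) ?_ ?_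
  · rintro F hF
    refine ⟨?_, fun D hD hFD => ?_⟩
    · rw [isDissocSet_induce_iff, hval]
      exact hF.1.1.mono Set.inter_subset_left
    · have hTD : IsDissocSet G (T ∪ Subtype.val '' D) := by
        refine hT.union (isDissocSet_induce_iff.mp hD) ?_
        rintro t ht _ ⟨d, -, rfl⟩ hadj
        exact d.2 (hTS t ht hadj)
      have hFT : F ⊆ T ∪ Subtype.val '' D := by
        rw [hdecomp F hF, ← hval]
        exact Set.union_subset_union_right _ (Set.image_mono hFD)
      refine hFD.antisymm fun x hx => ?_
      rw [Set.mem_preimage, hF.1.2 _ hTD hFT]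
      exact Or.inr ⟨x, hx, rfl⟩
  · intro F hF F' hF' h
    rw [hdecomp F hF, hdecomp F' hF', ← hval, ← hval]
    exact congrArg (T ∪ Subtype.val '' ·) h

theorem IsDissocSet.trace_cases [Finite V] {F : Set V} (hF : IsDissocSet G F) (v : V) :
    F ∩ {v} = ∅ ∨ F ∩ insert v (G.neighborSet v) = {v} ∨
      ∃ u, G.Adj v u ∧
        F ∩ (insert v (G.neighborSet v) ∪ insert u (G.neighborSet u)) = {v, u} := by
  by_cases hv : v ∈ F
  swap
  · exact Or.inl (Set.inter_singleton_eq_empty.mpr hv)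
  by_cases hmatched : ∃ u ∈ F, G.Adj v u
  · obtain ⟨u, hu, hvu⟩ := hmatched
    refine Or.inr (Or.inr ⟨u, hvu, ?_⟩)
    refine Set.Subset.antisymm ?_ (Set.insert_subset_iff.mpr ⟨⟨hv, by simp⟩, by simp [hu, hvu]⟩)
    rintro x ⟨hx, (rfl | hvx) | (rfl | hux)⟩
    · exact Or.inl rfl
    · exact Or.inr (hF.eq_of_adj_of_adj hv hx hu hvx hvu)
    · exact Or.inr rfl
    · exact Or.inl (hF.eq_of_adj_of_adj hu hx hv hux hvu.symm)
  · push Not at hmatched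
    refine Or.inr (Or.inl (Set.Subset.antisymm ?_ (by simpa using hv)))
    rintro x ⟨hx, rfl | hvx⟩
    · rfl
    · exact absurd hvx (hmatched x hx)

end

theorem numMaximalDissoc_le_rec {V : Type*} [Fintype V] (G : SimpleGraph V)
    [DecidableRel G.Adj] (v : V) :
    numMaximalDissoc G ≤
      phiDel G {v} + phiDel G (insert v (G.neighborSet v)) +
        ∑ u ∈ G.neighborFinset v,
          phiDel G (insert v (G.neighborSet v) ∪ insert u (G.neighborSet u)) := by
  set N : V → Set V := fun x => insert x (G.neighborSet x)
  have hcover : {F | IsMaximalDissocSet G F} ⊆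
      (maxDissocWithTrace G {v} ∅ ∪ maxDissocWithTrace G (N v) {v}) ∪
        ⋃ u ∈ G.neighborFinset v, maxDissocWithTrace G (N v ∪ N u) {v, u} := by
    intro F hF
    rcases hF.1.trace_cases v with h | h | ⟨u, hvu, h⟩
    · exact Or.inl (Or.inl ⟨hF, h⟩)
    · exact Or.inl (Or.inr ⟨hF, h⟩)
    · exact Or.inr (Set.mem_biUnion (by simpa using hvu) ⟨hF, h⟩)
  calc numMaximalDissoc G ≤ _ := Set.ncard_le_ncard hcover
    _ ≤ _ := Set.ncard_union_le _ _
    _ ≤ _ := add_le_add (Set.ncard_union_le _ _) (Finset.set_ncard_biUnion_le _ _)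
    _ ≤ _ := by
      gcongr with u
      · exact ncard_maxDissocWithTrace_le_phiDel (isDissocSet_of_ncard_le_two (by simp)) (by simp)
      · exact ncard_maxDissocWithTrace_le_phiDel (isDissocSet_of_ncard_le_two (by simp))
          (by simp [N])
      · refine ncard_maxDissocWithTrace_le_phiDel
          (isDissocSet_of_ncard_le_two ((Set.ncard_insert_le _ _).trans (by simp))) ?_
        rintro t (rfl | rfl)
        exacts [(Set.subset_insert _ _).trans Set.subset_union_left,
          (Set.subset_insert _ _).trans Set.subset_union_right]
end

section
/- Let G be a finite simple graph, let v be a vertex of degree 1 in G, and let w be its unique neighbor. Then φ(G) ≤ Σ_{u ∈ N(w)\{v}} φ(G − (N[w] ∪ N[u])) + φ(G − {v, w}) + φ(G − N[w]). -/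
open SimpleGraph Finset

/-! Sort the maximal dissociation sets `F` of `G` by how they meet the leaf `v` and its neighbour
`w`. If `w ∉ F`, maximality forces `v ∈ F`; if `w ∈ F`, maximality forces `w` to have a (unique)
partner `u ∈ F`, either `v` or another neighbour of `w`. In each case `F` has a fixed trace on a
set `S` (`{v, w}`, `N[w]`, or `N[w] ∪ N[u]`) and the traced vertices have no neighbours outside
`S`, so `F \ S` is a maximal dissociation set of `G − S` from which `F` is recovered. -/

namespace SimpleGraph

variable {V : Type*} {G : SimpleGraph V} {F S T : Set V} {x v w u : V}

theorem isDissocSet_iff [Finite V] :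
    IsDissocSet G F ↔ ∀ y ∈ F, ∀ a ∈ F, ∀ b ∈ F, G.Adj y a → G.Adj y b → a = b := by
  refine forall₂_congr fun y _ ↦ ?_
  rw [Set.ncard_le_one]
  exact ⟨fun h a ha b hb hya hyb ↦ h a ⟨ha, hya⟩ b ⟨hb, hyb⟩,
    fun h a ha b hb ↦ h a ha.1 b hb.1 ha.2 hb.2⟩

theorem IsDissocSet.insert_of_forall_adj [Finite V] (hF : IsDissocSet G F)
    (hx₁ : ∀ a ∈ F, ∀ b ∈ F, G.Adj x a → G.Adj x b → a = b)
    (hx₂ : ∀ y ∈ F, G.Adj x y → ∀ a ∈ F, ¬ G.Adj y a) :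
    IsDissocSet G (insert x F) := by
  rw [isDissocSet_iff] at hF ⊢
  rintro y (rfl | hy) a ha b hb hya hyb
  · exact hx₁ a (ha.resolve_left hya.ne') b (hb.resolve_left hyb.ne') hya hyb
  · rcases ha with rfl | ha <;> rcases hb with rfl | hb
    · rfl
    · exact (hx₂ y hy hya.symm b hb hyb).elim
    · exact (hx₂ y hy hyb.symm a ha hya).elim
    · exact hF y hy a ha b hb hya hyb

theorem IsMaximalDissocSet.mem_of_isDissocSet_insert (hF : IsMaximalDissocSet G F)
    (hx : IsDissocSet G (insert x F)) : x ∈ F :=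
  hF.2 _ hx (Set.subset_insert x F) ▸ Set.mem_insert x F

theorem IsMaximalDissocSet.mem_of_leaf [Finite V] (hF : IsMaximalDissocSet G F)
    (hleaf : ∀ x, G.Adj v x → x = w) (hw : w ∈ F → ∀ a ∈ F, ¬ G.Adj w a) : v ∈ F := by
  refine hF.mem_of_isDissocSet_insert (hF.1.insert_of_forall_adj ?_ ?_)
  · intro a _ b _ ha hb
    rw [hleaf a ha, hleaf b hb]
  · intro y hy hvy
    exact hleaf y hvy ▸ hw (hleaf y hvy ▸ hy)

theorem IsDissocSet.inter_insert_neighborSet_eq [Finite V] (hF : IsDissocSet G F) (hw : w ∈ F)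
    (hu : u ∈ F) (hwu : G.Adj w u) : F ∩ insert w (G.neighborSet w) = {w, u} := by
  rw [isDissocSet_iff] at hF
  ext x
  constructor
  · rintro ⟨hx, rfl | hwx⟩
    · exact Or.inl rfl
    · exact Or.inr (hF w hw x hx u hu hwx hwu)
  · rintro (rfl | rfl)
    · exact ⟨hw, Set.mem_insert x _⟩
    · exact ⟨hu, Or.inr hwu⟩

/-- A vertex outside `S` sees exactly the same part of `F` in `G` and in `G − S`. -/
theorem IsMaximalDissocSet.preimage_val_induce_compl [Finite V] (hF : IsMaximalDissocSet G F)
    (hS : ∀ y ∈ F ∩ S, G.neighborSet y ⊆ S) :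
    IsMaximalDissocSet (G.induce Sᶜ) (Subtype.val ⁻¹' F) := by
  have hd := isDissocSet_iff.mp hF.1
  have hout : ∀ y ∈ F, ∀ z ∉ S, G.Adj z y → y ∉ S := fun y hy z hz hzy hyS ↦
    hz (hS y ⟨hy, hyS⟩ hzy.symm)
  refine ⟨isDissocSet_iff.mpr fun y hy a ha b hb hya hyb ↦
    Subtype.ext (hd y hy a ha b hb hya hyb), fun F' hF' hsub ↦ ?_⟩
  have hd' := isDissocSet_iff.mp hF'
  have mem' : ∀ y (hy : y ∈ F) (hyS : y ∉ S), (⟨y, hyS⟩ : ↥Sᶜ) ∈ F' := fun _ hy _ ↦ hsub hy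
  refine hsub.antisymm fun x hx ↦ ?_
  by_contra hxF
  refine hxF (hF.mem_of_isDissocSet_insert (hF.1.insert_of_forall_adj ?_ ?_))
  · intro a ha b hb hxa hxb
    have haS := hout a ha x x.2 hxa
    have hbS := hout b hb x x.2 hxb
    exact congrArg Subtype.val (hd' x hx _ (mem' a ha haS) _ (mem' b hb hbS) hxa hxb)
  · intro y hy hxy a ha hya
    have hyS := hout y hy x x.2 hxy
    have haS := hout a ha y hyS hya
    have hxa := hd' ⟨y, hyS⟩ (mem' y hy hyS) x hx _ (mem' a ha haS) hxy.symm hya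
    exact hxF (hxa ▸ ha)

def maxDissocTrace (G : SimpleGraph V) (S T : Set V) : Set (Set V) :=
  {F | IsMaximalDissocSet G F ∧ F ∩ S = T}

/-- Sets with a common trace on `S` are determined by their trace on `Sᶜ`. -/
theorem ncard_maxDissocTrace_le_phiDel [Finite V] (hT : ∀ t ∈ T, G.neighborSet t ⊆ S) :
    (maxDissocTrace G S T).ncard ≤ phiDel G S := by
  refine Set.ncard_le_ncard_of_injOn (fun F ↦ Subtype.val ⁻¹' F)
    (fun F hF ↦ hF.1.preimage_val_induce_compl fun y hy ↦ hT y (hF.2 ▸ hy)) ?_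
  intro F₁ hF₁ F₂ hF₂ h
  replace h : Sᶜ ∩ F₁ = Sᶜ ∩ F₂ := (Subtype.preimage_val_eq_preimage_val_iff _ _ _).mp h
  rw [← Set.inter_union_compl F₁ S, ← Set.inter_union_compl F₂ S, hF₁.2, hF₂.2,
    Set.inter_comm, h, Set.inter_comm]

theorem setOf_isMaximalDissocSet_subset_of_leaf [Fintype V] [DecidableEq V] [DecidableRel G.Adj]
    (hleaf : ∀ x, G.Adj v x → x = w) (hvw : G.Adj v w) :
    {F | IsMaximalDissocSet G F} ⊆
      (⋃ u ∈ G.neighborFinset w \ {v},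
          maxDissocTrace G (insert w (G.neighborSet w) ∪ insert u (G.neighborSet u)) {w, u}) ∪
        maxDissocTrace G {v, w} {v} ∪ maxDissocTrace G (insert w (G.neighborSet w)) {w, v} := by
  intro F hF
  by_cases hwF : w ∈ F
  · obtain ⟨u, huF, hwu⟩ : ∃ u ∈ F, G.Adj w u := by
      by_contra! h
      exact h v (hF.mem_of_leaf hleaf fun _ ↦ h) hvw.symm
    have hwN := hF.1.inter_insert_neighborSet_eq hwF huF hwu
    obtain rfl | huv := eq_or_ne u v
    · exact Or.inr ⟨hF, hwN⟩
    · refine Or.inl (Or.inl (Set.mem_biUnion (x := u) (by simp [hwu, huv]) ⟨hF, ?_⟩))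
      rw [Set.inter_union_distrib_left, hwN, hF.1.inter_insert_neighborSet_eq huF hwF hwu.symm,
        Set.pair_comm, Set.union_self]
  · have hvF := hF.mem_of_leaf hleaf fun h ↦ (hwF h).elim
    refine Or.inl (Or.inr ⟨hF, ?_⟩)
    ext x
    constructor
    · rintro ⟨hx, rfl | rfl⟩
      exacts [rfl, (hwF hx).elim]
    · rintro rfl
      exact ⟨hvF, Or.inl rfl⟩

end SimpleGraph

theorem numMaximalDissoc_le_rec_of_leaf {V : Type*} [Fintype V] [DecidableEq V]
    (G : SimpleGraph V) [DecidableRel G.Adj] (v w : V)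
    (hdv : G.degree v = 1) (hvw : G.Adj v w) :
    numMaximalDissoc G ≤
      (∑ u ∈ G.neighborFinset w \ {v},
          phiDel G (insert w (G.neighborSet w) ∪ insert u (G.neighborSet u))) +
        phiDel G {v, w} + phiDel G (insert w (G.neighborSet w)) := by
  have hleaf : ∀ x, G.Adj v x → x = w := fun x hx ↦
    (degree_eq_one_iff_existsUnique_adj.mp hdv).unique hx hvw
  calc numMaximalDissoc G
      ≤ (⋃ u ∈ G.neighborFinset w \ {v},
            maxDissocTrace G (insert w (G.neighborSet w) ∪ insert u (G.neighborSet u)) {w, u}).ncard +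
          (maxDissocTrace G {v, w} {v}).ncard +
          (maxDissocTrace G (insert w (G.neighborSet w)) {w, v}).ncard :=
        (Set.ncard_le_ncard (setOf_isMaximalDissocSet_subset_of_leaf hleaf hvw)).trans <|
          (Set.ncard_union_le _ _).trans (add_le_add_left (Set.ncard_union_le _ _) _)
    _ ≤ _ := by
        gcongr ?_ + ?_ + ?_
        · refine (Finset.set_ncard_biUnion_le _ _).trans (Finset.sum_le_sum fun u _ ↦ ?_)
          refine ncard_maxDissocTrace_le_phiDel ?_
          rintro t (rfl | rfl) x hx
          exacts [Or.inl (Or.inr hx), Or.inr (Or.inr hx)]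
        · refine ncard_maxDissocTrace_le_phiDel ?_
          rintro t rfl x hx
          exact Or.inr (hleaf x hx)
        · refine ncard_maxDissocTrace_le_phiDel ?_
          rintro t (rfl | rfl) x hx
          exacts [Or.inr hx, Or.inl (hleaf x hx)]
end

section
/- For every n ≥ 1, the number of maximal dissociation sets of the path P_n on n vertices satisfies φ(P_n) < 0.81 · 6^(n/4). -/
open SimpleGraph Finset

/-!
Shift the indicator word of `F ⊆ P_n` two places and pad it with zeros. Then `F` is a maximal
dissociation set iff every window of five letters centred at a vertex is admissible: no three
consecutive ones, and a zero at the centre would complete three consecutive ones. So `φ(P_n)`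
counts words accepted by a transfer over the last four letters. A weight on these sixteen states
satisfying `9 · Σ w(next) ≤ 14 · w` bounds the count by a constant times `(14/9)^n`, and
`(14/9)^4 < 6`.
-/

section Dissociation

variable {V : Type*} {G : SimpleGraph V} {F F' : Set V}

theorem isDissocSet_iff_forall_adj [Finite V] :
    IsDissocSet G F ↔
      ∀ v ∈ F, ∀ u ∈ F, ∀ w ∈ F, G.Adj v u → G.Adj v w → u = w := by
  refine forall₂_congr fun v _ => ?_
  rw [Set.ncard_le_one_iff]
  exact ⟨fun h u hu w hw hvu hvw => h ⟨hu, hvu⟩ ⟨hw, hvw⟩,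
    fun h u w hu hw => h u hu.1 w hw.1 hu.2 hw.2⟩

theorem IsDissocSet.subset [Finite V] (h : IsDissocSet G F') (hF : F ⊆ F') : IsDissocSet G F := by
  rw [isDissocSet_iff_forall_adj] at h ⊢
  exact fun v hv u hu w hw => h v (hF hv) u (hF hu) w (hF hw)

theorem isMaximalDissocSet_iff_forall_insert [Finite V] :
    IsMaximalDissocSet G F ↔ IsDissocSet G F ∧ ∀ v ∉ F, ¬IsDissocSet G (insert v F) := by
  refine and_congr_right fun _ => ⟨fun h v hv hins => ?_, fun h F' hF' hF => ?_⟩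
  · exact hv (h _ hins (Set.subset_insert v F) ▸ Set.mem_insert v F)
  · by_contra hne
    obtain ⟨v, hvF', hvF⟩ := Set.exists_of_ssubset (hF.ssubset_of_ne hne)
    exact h v hvF (hF'.subset (Set.insert_subset hvF' hF))

end Dissociation

/-- `x` is the indicator of `F` shifted by two: vertex `v` sits at position `v + 2`, and the two
zeros in front let every window `x t, …, x (t + 4)` with `t < n` be centred at vertex `t`
without truncated subtraction. -/
def IsPaddedIndicator {n : ℕ} (F : Set (Fin n)) (x : ℕ → Bool) : Prop :=
  ∀ j, x j = true ↔ ∃ v ∈ F, (v : ℕ) + 2 = j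

/-- Admissibility of a window centred at `c`: `b c d` are not all chosen, and if `c` is not chosen,
adding it would create three consecutive chosen vertices. -/
def windowOK (a b c d e : Bool) : Bool :=
  !(b && c && d) && (c || a && b || b && d || d && e)

namespace IsPaddedIndicator

variable {n : ℕ} {F : Set (Fin n)} {x : ℕ → Bool}

theorem apply_add_two (hx : IsPaddedIndicator F x) (v : Fin n) : x (v + 2) = true ↔ v ∈ F :=
  (hx _).trans ⟨fun ⟨u, hu, huv⟩ => by rwa [Fin.ext (by omega : u.val = v.val)] at hu,
    fun hv => ⟨v, hv, rfl⟩⟩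

theorem lt_of_apply (hx : IsPaddedIndicator F x) {j : ℕ} (h : x j = true) : j < n + 2 := by
  obtain ⟨v, -, rfl⟩ := (hx j).1 h
  omega

theorem update (hx : IsPaddedIndicator F x) (v : Fin n) :
    IsPaddedIndicator (insert v F) (Function.update x (v + 2) true) := by
  intro j
  rw [Function.update_apply]
  split_ifs with hj
  · exact iff_of_true rfl ⟨v, Set.mem_insert v F, hj.symm⟩
  · rw [hx j]
    refine exists_congr fun u => and_congr_left fun huj => ?_
    rw [Set.mem_insert_iff, or_iff_right fun huv => hj (by rw [← huj, huv])]

theorem isDissocSet_iff (hx : IsPaddedIndicator F x) :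
    IsDissocSet (pathGraph n) F ↔ ∀ t, ¬(x t ∧ x (t + 1) ∧ x (t + 2)) := by
  rw [isDissocSet_iff_forall_adj]
  constructor
  · rintro h t ⟨h₀, h₁, h₂⟩
    obtain ⟨u, hu, rfl⟩ := (hx _).1 h₀
    obtain ⟨v, hv, hvu⟩ := (hx _).1 h₁
    obtain ⟨w, hw, hwu⟩ := (hx _).1 h₂
    have := h v hv u hu w hw (pathGraph_adj.2 (by omega)) (pathGraph_adj.2 (by omega))
    omega
  · intro h v hv u hu w hw hvu hvw
    rw [pathGraph_adj] at hvu hvw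
    by_contra hne
    have hne' : u.val ≠ w.val := Fin.val_injective.ne hne
    obtain ⟨a, ha, c, hc, hav, hvc⟩ :
        ∃ a ∈ F, ∃ c ∈ F, a.val + 1 = v ∧ v.val + 1 = c := by
      rcases hvu with hvu | hvu <;> rcases hvw with hvw | hvw
      exacts [absurd (by omega) hne', ⟨w, hw, u, hu, hvw, hvu⟩, ⟨u, hu, w, hw, hvu, hvw⟩,
        absurd (by omega) hne']
    exact h (a + 2) ⟨(hx _).2 ⟨a, ha, rfl⟩, (hx _).2 ⟨v, hv, by omega⟩,
      (hx _).2 ⟨c, hc, by omega⟩⟩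

theorem not_isDissocSet_insert_iff (hx : IsPaddedIndicator F x)
    (hF : IsDissocSet (pathGraph n) F) (v : Fin n) :
    ¬IsDissocSet (pathGraph n) (insert v F) ↔
      x v ∧ x (v + 1) ∨ x (v + 1) ∧ x (v + 3) ∨ x (v + 3) ∧ x (v + 4) := by
  rw [(hx.update v).isDissocSet_iff, not_forall_not]
  constructor
  · rintro ⟨t, h₀, h₁, h₂⟩
    by_cases ht : t = v ∨ t = v + 1 ∨ t = v + 2
    · rcases ht with rfl | rfl | rfl
      · simp only [Function.update_of_ne (by omega : (v : ℕ) ≠ v + 2),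
          Function.update_of_ne (by omega : (v : ℕ) + 1 ≠ v + 2)] at h₀ h₁
        exact .inl ⟨h₀, h₁⟩
      · simp only [Function.update_of_ne (by omega : (v : ℕ) + 1 ≠ v + 2),
          Function.update_of_ne (by omega : (v : ℕ) + 1 + 2 ≠ v + 2)] at h₀ h₂
        exact .inr (.inl ⟨h₀, h₂⟩)
      · simp only [Function.update_of_ne (by omega : (v : ℕ) + 2 + 1 ≠ v + 2),
          Function.update_of_ne (by omega : (v : ℕ) + 2 + 2 ≠ v + 2)] at h₁ h₂
        exact .inr (.inr ⟨h₁, h₂⟩)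
    · rw [Function.update_of_ne (by omega)] at h₀ h₁ h₂
      exact absurd ⟨h₀, h₁, h₂⟩ (hx.isDissocSet_iff.1 hF t)
  · rintro (⟨h₀, h₁⟩ | ⟨h₀, h₁⟩ | ⟨h₀, h₁⟩)
    · exact ⟨v, by simp [h₀, h₁]⟩
    · exact ⟨v + 1, by simp [h₀, h₁, add_assoc]⟩
    · exact ⟨v + 2, by simp [h₀, h₁, add_assoc]⟩

theorem isMaximalDissocSet_iff (hx : IsPaddedIndicator F x) :
    IsMaximalDissocSet (pathGraph n) F ↔
      ∀ t < n, windowOK (x t) (x (t + 1)) (x (t + 2)) (x (t + 3)) (x (t + 4)) := by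
  simp only [windowOK, Bool.and_eq_true, Bool.not_eq_true', Bool.eq_false_iff, ne_eq,
    Bool.or_eq_true, and_assoc, or_assoc]
  rw [isMaximalDissocSet_iff_forall_insert]
  constructor
  · rintro ⟨hF, hmax⟩ t ht
    refine ⟨hx.isDissocSet_iff.1 hF (t + 1), ?_⟩
    by_cases hc : x (t + 2) = true
    · exact .inl hc
    have hv : (⟨t, ht⟩ : Fin n) ∉ F := fun h => hc ((hx.apply_add_two _).2 h)
    exact .inr ((hx.not_isDissocSet_insert_iff hF _).1 (hmax _ hv))
  · intro h
    have hF : IsDissocSet (pathGraph n) F := by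
      refine hx.isDissocSet_iff.2 fun t ⟨h₀, h₁, h₂⟩ => ?_
      obtain ⟨u, -, rfl⟩ := (hx t).1 h₀
      exact (h (u + 1) (by have := hx.lt_of_apply h₂; omega)).1 ⟨h₀, h₁, h₂⟩
    refine ⟨hF, fun v hv => (hx.not_isDissocSet_insert_iff hF v).2 ?_⟩
    exact ((h v v.isLt).2).resolve_left fun h => hv ((hx.apply_add_two v).1 h)

end IsPaddedIndicator

def windowsOK : List Bool → Bool
  | a :: b :: c :: d :: e :: l => windowOK a b c d e && windowsOK (b :: c :: d :: e :: l)
  | _ => true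

theorem windowsOK_iff (l : List Bool) :
    windowsOK l ↔ ∀ t, t + 4 < l.length → windowOK (l.getD t false) (l.getD (t + 1) false)
      (l.getD (t + 2) false) (l.getD (t + 3) false) (l.getD (t + 4) false) := by
  induction l using windowsOK.induct with
  | case1 a b c d e l ih =>
    rw [windowsOK, Bool.and_eq_true, ih]
    constructor
    · rintro ⟨h₀, h⟩ (_ | t) ht
      · exact h₀
      · simpa using h t (by simpa using ht)
    · intro h
      exact ⟨h 0 (by simp), fun t ht => by simpa using h (t + 1) (by simpa using ht)⟩
  | case2 l hl =>
    rcases l with _ | ⟨a, _ | ⟨b, _ | ⟨c, _ | ⟨d, _ | ⟨e, l⟩⟩⟩⟩⟩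
    iterate 5 simp [windowsOK]
    exact absurd rfl (hl a b c d e l)

def padWord {n : ℕ} (s : Fin n → Bool) : List Bool :=
  false :: false :: (List.ofFn s ++ [false, false])

theorem isPaddedIndicator_padWord {n : ℕ} (s : Fin n → Bool) :
    IsPaddedIndicator {i | s i} fun j => (padWord s).getD j false := by
  rintro (_ | _ | j)
  · simp [padWord]
  · simp [padWord]
  simp only [padWord, List.getD_cons_succ, Set.mem_ofPred_eq, add_left_inj]
  by_cases hj : j < n
  · rw [List.getD_append _ _ _ _ (by simpa), List.getD_eq_getElem?_getD, List.getElem?_ofFn,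
      dif_pos hj, Option.getD_some]
    exact ⟨fun h => ⟨⟨j, hj⟩, h, rfl⟩,
      fun ⟨v, hv, hvj⟩ => by rwa [(Fin.ext hvj : v = ⟨j, hj⟩)] at hv⟩
  · have hpad : [false, false].getD (j - n) false = false := by
      rcases j - n with _ | _ | k <;> rfl
    rw [List.getD_append_right _ _ _ _ (by simpa using hj), List.length_ofFn, hpad]
    exact iff_of_false Bool.false_ne_true fun ⟨v, _, hvj⟩ => hj (hvj ▸ v.isLt)

theorem isMaximalDissocSet_pathGraph_iff_windowsOK {n : ℕ} (s : Fin n → Bool) :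
    IsMaximalDissocSet (pathGraph n) {i | s i} ↔ windowsOK (padWord s) := by
  rw [(isPaddedIndicator_padWord s).isMaximalDissocSet_iff, windowsOK_iff]
  simp [padWord]

def numCompletions (p : List Bool) (m : ℕ) : ℕ :=
  #{s : Fin m → Bool | windowsOK (p ++ (List.ofFn s ++ [false, false]))}

theorem numMaximalDissoc_pathGraph_eq (n : ℕ) :
    numMaximalDissoc (pathGraph n) = numCompletions [false, false] n := by
  classical
  rw [numMaximalDissoc, numCompletions, ← Set.ncard_coe_finset, Finset.coe_filter]
  symm
  refine Set.ncard_congr (fun s _ => {i | s i}) (fun s hs => ?_) (fun s s' _ _ h => ?_)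
    (fun F hF => ⟨fun i => decide (i ∈ F), ?_, by simp⟩)
  · exact (isMaximalDissocSet_pathGraph_iff_windowsOK s).2 hs.2
  · funext i
    simpa using Set.ext_iff.1 h i
  · exact ⟨mem_univ _, (isMaximalDissocSet_pathGraph_iff_windowsOK _).1 (by simpa using hF)⟩

theorem numCompletions_zero (p : List Bool) :
    numCompletions p 0 = if windowsOK (p ++ [false, false]) then 1 else 0 := by
  simp only [numCompletions, List.ofFn_zero, List.nil_append]
  split_ifs <;> simp [*]

theorem numCompletions_succ (p : List Bool) (m : ℕ) :
    numCompletions p (m + 1) =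
      numCompletions (p ++ [false]) m + numCompletions (p ++ [true]) m := by
  simp only [numCompletions, Finset.card_filter]
  rw [← (Fin.consEquiv fun _ => Bool).sum_comp, Fintype.sum_prod_type, Fintype.sum_bool, add_comm]
  simp [Fin.consEquiv, List.ofFn_succ]

theorem numCompletions_cons (a b c d e : Bool) (p : List Bool) (m : ℕ) :
    numCompletions (a :: b :: c :: d :: e :: p) m =
      if windowOK a b c d e then numCompletions (b :: c :: d :: e :: p) m else 0 := by
  simp only [numCompletions, List.cons_append, windowsOK]
  cases windowOK a b c d e <;> simp

/-- Found by value iteration for the inequality `stateWeight_step`. -/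
def stateWeight (a b c d : Bool) : ℕ :=
  if c && d then (if b then 0 else 8)
  else if c || d then (if b then 9 else 6)
  else if a && b then 4 else 0

theorem stateWeight_ge (a b c d : Bool) :
    8 * (if windowsOK [a, b, c, d, false, false] then 1 else 0) ≤ stateWeight a b c d := by
  revert a b c d; decide

theorem stateWeight_step (a b c d : Bool) :
    9 * ((if windowOK a b c d false then stateWeight b c d false else 0) +
      (if windowOK a b c d true then stateWeight b c d true else 0)) ≤
        14 * stateWeight a b c d := by
  revert a b c d; decide

theorem numCompletions_le (m : ℕ) (a b c d : Bool) :
    8 * 9 ^ m * numCompletions [a, b, c, d] m ≤ stateWeight a b c d * 14 ^ m := by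
  induction m generalizing a b c d with
  | zero => simpa [numCompletions_zero] using stateWeight_ge a b c d
  | succ m ih =>
    have step (e : Bool) :
        8 * 9 ^ m * (if windowOK a b c d e then numCompletions [b, c, d, e] m else 0) ≤
          (if windowOK a b c d e then stateWeight b c d e else 0) * 14 ^ m := by
      split_ifs
      exacts [ih b c d e, by simp]
    simp only [numCompletions_succ, List.cons_append, List.nil_append, numCompletions_cons]
    rw [pow_succ, pow_succ]
    linarith [step false, step true, Nat.mul_le_mul_right (14 ^ m) (stateWeight_step a b c d)]

theorem numMaximalDissoc_pathGraph_add_four_le (k : ℕ) :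
    8 * 9 ^ k * numMaximalDissoc (pathGraph (k + 4)) ≤ 36 * 14 ^ k := by
  -- only six four-letter starts are admissible after the two leading zeros
  have hsplit : numMaximalDissoc (pathGraph (k + 4)) =
      numCompletions [false, true, true, false] k + numCompletions [false, true, true, true] k +
      numCompletions [true, false, true, false] k + numCompletions [true, false, true, true] k +
      numCompletions [true, true, false, false] k + numCompletions [true, true, false, true] k := by
    simp [numMaximalDissoc_pathGraph_eq, numCompletions_succ, numCompletions_cons, windowOK,
      add_assoc]
  calc 8 * 9 ^ k * numMaximalDissoc (pathGraph (k + 4))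
      ≤ (stateWeight false true true false + stateWeight false true true true +
          stateWeight true false true false + stateWeight true false true true +
          stateWeight true true false false + stateWeight true true false true) * 14 ^ k := by
        simp only [hsplit, mul_add, add_mul]
        gcongr ?_ + ?_ + ?_ + ?_ + ?_ + ?_ <;> apply numCompletions_le
    _ = 36 * 14 ^ k := by rfl

theorem numMaximalDissoc_pathGraph_lt (n : ℕ) (hn : 1 ≤ n) :
    (numMaximalDissoc (pathGraph n) : ℝ) < 81 / 100 * (14 / 9) ^ n := by
  match n, hn with
  | 1, _ | 2, _ | 3, _ =>
    norm_num [numMaximalDissoc_pathGraph_eq, numCompletions_succ, numCompletions_zero, windowsOK,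
      windowOK]
  | k + 4, _ =>
    have hk : (8 * 9 ^ k * numMaximalDissoc (pathGraph (k + 4)) : ℝ) ≤ 36 * 14 ^ k := by
      exact_mod_cast numMaximalDissoc_pathGraph_add_four_le k
    have h14 : (0 : ℝ) < 14 ^ k := by positivity
    have h9 : (0 : ℝ) < 9 ^ k := by positivity
    rw [pow_add, div_pow, mul_comm (14 ^ k / 9 ^ k : ℝ), ← mul_assoc, ← mul_div_assoc,
      lt_div_iff₀ h9]
    linarith

theorem pow_le_rpow_div_four {x y : ℝ} (hx : 0 ≤ x) (hxy : x ^ 4 ≤ y) (n : ℕ) :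
    x ^ n ≤ y ^ ((n : ℝ) / 4) := by
  have hy : 0 ≤ y := (by positivity : 0 ≤ x ^ 4).trans hxy
  have hx' : x ≤ y ^ (4⁻¹ : ℝ) :=
    (Real.le_rpow_inv_iff_of_pos hx hy (by norm_num)).2 (by exact_mod_cast hxy)
  calc x ^ n ≤ (y ^ (4⁻¹ : ℝ)) ^ n := pow_le_pow_left₀ hx hx' n
    _ = y ^ ((n : ℝ) / 4) := by rw [← Real.rpow_mul_natCast hy]; ring_nf

theorem numMaximalDissoc_pathGraph (n : ℕ) (hn : 1 ≤ n) :
    (numMaximalDissoc (pathGraph n) : ℝ) < 0.81 * (6 : ℝ) ^ ((n : ℝ) / 4) := by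
  calc (numMaximalDissoc (pathGraph n) : ℝ) < 81 / 100 * (14 / 9) ^ n :=
        numMaximalDissoc_pathGraph_lt n hn
    _ ≤ 0.81 * (6 : ℝ) ^ ((n : ℝ) / 4) := by
        norm_num only
        gcongr
        exact pow_le_rpow_div_four (by norm_num) (by norm_num) n
end
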